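/- arXiv:2109.14192 — 4 statements merged into one kernel-verified Lean document; each statement's English description precedes it below -/
import Mathlib

section
/- Let (Y,μ) and (Z,ν) be σ-finite measure spaces, K : Y × Z → [0,∞] a measurable kernel, and A > 0, B ≥ 0 constants such that ∫_Z K(y,z) dν(z) ≤ A for μ-almost every y and ∫_Y K(y,z) dμ(y) ≤ B for ν-almost every z. Let φ be a Young function and u : Z → [0,∞) a measurable function such that y ↦ ∫_Z K(y,z) u(z) dν(z) is finite for μ-almost every y. Then ∫_Y φ( (1/A)·∫_Z K(y,z) u(z) dν(z) ) dμ(y) ≤ (B/A)·∫_Z φ(u(z)) dν(z). -/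
open MeasureTheory ENNReal

/-- A Young function: a convex, even, nonnegative function `φ : ℝ → [0,∞)`
with `φ t = 0` iff `t = 0`. -/
def IsYoungFunction (φ : ℝ → ℝ) : Prop :=
  ConvexOn ℝ Set.univ φ ∧ (∀ t, φ (-t) = φ t) ∧ (∀ t, 0 ≤ φ t) ∧ (∀ t, φ t = 0 ↔ t = 0)

/-!
For almost every `y`, `K (y, ·) ν` is a measure of mass at most `A`, so Jensen's inequality,
normalised by `A` (harmless because `φ 0 = 0`), bounds `φ (A⁻¹ ∫ K (y, z) u z dν)` by
`A⁻¹ ∫ K (y, z) φ (u z) dν`. Integrating in `y` and exchanging the integrals (Tonelli), the column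
bound `∫ K (y, z) dμ ≤ B` gives the claim.
-/

open Set

theorem ConvexOn.map_smul_le_mul_of_map_zero {E : Type*} [AddCommGroup E] [Module ℝ E]
    {s : Set E} {g : E → ℝ} (hg : ConvexOn ℝ s g) (h0s : (0 : E) ∈ s) (hg0 : g 0 = 0)
    {x : E} (hx : x ∈ s) {t : ℝ} (ht0 : 0 ≤ t) (ht1 : t ≤ 1) :
    g (t • x) ≤ t * g x := by
  simpa [hg0] using hg.2 hx h0s ht0 (sub_nonneg.2 ht1) (add_sub_cancel t 1)

/-- Normalising by `A` instead of the mass `μ.real univ ≤ A` costs nothing, since `g 0 = 0`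
makes `g` subhomogeneous on `[0, 1]`. -/
theorem ConvexOn.map_inv_mul_integral_le {α : Type*} [MeasurableSpace α] {μ : Measure α}
    [IsFiniteMeasure μ] {g : ℝ → ℝ} (hg : ConvexOn ℝ univ g) (hg0 : g 0 = 0) {A : ℝ}
    (hμA : μ.real univ ≤ A) {f : α → ℝ} (hfi : Integrable f μ) (hgi : Integrable (g ∘ f) μ) :
    g (A⁻¹ * ∫ x, f x ∂μ) ≤ A⁻¹ * ∫ x, g (f x) ∂μ := by
  rcases eq_zero_or_neZero μ with rfl | hμ
  · simp [hg0]
  set c := μ.real univ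
  have hc : 0 < c := measureReal_univ_pos
  have hA : 0 < A := hc.trans_le hμA
  have jensen := hg.map_average_le (hg.continuousOn isOpen_univ) isClosed_univ
    (ae_of_all _ fun _ => mem_univ _) hfi hgi
  rw [average_eq, average_eq, smul_eq_mul, smul_eq_mul] at jensen
  calc g (A⁻¹ * ∫ x, f x ∂μ) = g ((c / A) • (c⁻¹ * ∫ x, f x ∂μ)) := by
        rw [smul_eq_mul]; congr 1; field_simp
    _ ≤ c / A * g (c⁻¹ * ∫ x, f x ∂μ) :=
        hg.map_smul_le_mul_of_map_zero (mem_univ _) hg0 (mem_univ _) (by positivity)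
          ((div_le_one hA).2 hμA)
    _ ≤ c / A * (c⁻¹ * ∫ x, g (f x) ∂μ) := by gcongr
    _ = A⁻¹ * ∫ x, g (f x) ∂μ := by field_simp

namespace IsYoungFunction

variable {φ : ℝ → ℝ}

theorem convexOn (hφ : IsYoungFunction φ) : ConvexOn ℝ univ φ := hφ.1

theorem nonneg (hφ : IsYoungFunction φ) (t : ℝ) : 0 ≤ φ t := hφ.2.2.1 t

theorem map_zero (hφ : IsYoungFunction φ) : φ 0 = 0 := (hφ.2.2.2 0).2 rfl

theorem continuous (hφ : IsYoungFunction φ) : Continuous φ :=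
  continuousOn_univ.1 (hφ.convexOn.continuousOn isOpen_univ)

theorem ofReal_map_inv_mul_lintegral_le (hφ : IsYoungFunction φ) {Z : Type*}
    [MeasurableSpace Z] {m : Measure Z} {A : ℝ} (hA : 0 < A) (hm : m univ ≤ ENNReal.ofReal A)
    {u : Z → ℝ} (hu : AEMeasurable u m) (hu0 : 0 ≤ᵐ[m] u) :
    ENNReal.ofReal (φ (A⁻¹ * (∫⁻ z, ENNReal.ofReal (u z) ∂m).toReal)) ≤
      (ENNReal.ofReal A)⁻¹ * ∫⁻ z, ENNReal.ofReal (φ (u z)) ∂m := by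
  have : IsFiniteMeasure m := ⟨hm.trans_lt ofReal_lt_top⟩
  have hφu : AEMeasurable (φ ∘ u) m := hφ.continuous.measurable.comp_aemeasurable hu
  by_cases hφtop : ∫⁻ z, ENNReal.ofReal (φ (u z)) ∂m = ⊤
  · rw [hφtop, mul_top (by simp)]
    exact le_top
  -- An infinite integral has junk value `toReal ⊤ = 0`, and `φ 0 = 0`.
  by_cases hutop : ∫⁻ z, ENNReal.ofReal (u z) ∂m = ⊤
  · simp [hutop, hφ.map_zero]
  have hui := (lintegral_ofReal_ne_top_iff_integrable hu.aestronglyMeasurable hu0).1 hutop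
  have hφi := (lintegral_ofReal_ne_top_iff_integrable hφu.aestronglyMeasurable
    (ae_of_all _ fun z => hφ.nonneg (u z))).1 hφtop
  have hmA : m.real univ ≤ A := toReal_le_of_le_ofReal hA.le hm
  have key := hφ.convexOn.map_inv_mul_integral_le hφ.map_zero hmA hui hφi
  rw [integral_eq_lintegral_of_nonneg_ae hu0 hu.aestronglyMeasurable,
    integral_eq_lintegral_of_nonneg_ae (ae_of_all _ fun z => hφ.nonneg (u z))
      hφu.aestronglyMeasurable] at key
  calc _ ≤ ENNReal.ofReal (A⁻¹ * (∫⁻ z, ENNReal.ofReal (φ (u z)) ∂m).toReal) :=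
        ENNReal.ofReal_le_ofReal key
    _ = _ := by rw [ofReal_mul (inv_nonneg.2 hA.le), ofReal_toReal hφtop, ofReal_inv_of_pos hA]

theorem ofReal_map_inv_mul_lintegral_mul_le (hφ : IsYoungFunction φ) {Z : Type*}
    [MeasurableSpace Z] {ν : Measure Z} {κ : Z → ℝ≥0∞} (hκ : Measurable κ) {A : ℝ} (hA : 0 < A)
    (hκA : ∫⁻ z, κ z ∂ν ≤ ENNReal.ofReal A) {u : Z → ℝ} (hu : Measurable u)
    (hu0 : 0 ≤ᵐ[ν] u) :
    ENNReal.ofReal (φ (A⁻¹ * (∫⁻ z, κ z * ENNReal.ofReal (u z) ∂ν).toReal)) ≤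
      (ENNReal.ofReal A)⁻¹ * ∫⁻ z, κ z * ENNReal.ofReal (φ (u z)) ∂ν := by
  have h := hφ.ofReal_map_inv_mul_lintegral_le (m := ν.withDensity κ) hA
    (by rwa [withDensity_apply _ MeasurableSet.univ, setLIntegral_univ]) hu.aemeasurable
    ((withDensity_absolutelyContinuous ν κ).ae_le hu0)
  rw [lintegral_withDensity_eq_lintegral_mul _ hκ hu.ennreal_ofReal,
    lintegral_withDensity_eq_lintegral_mul _ hκ (g := fun z => ENNReal.ofReal (φ (u z)))
      (hφ.continuous.measurable.comp hu).ennreal_ofReal] at h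
  exact h

end IsYoungFunction

theorem lintegral_lintegral_mul_le_of_ae_lintegral_le {Y Z : Type*} [MeasurableSpace Y]
    [MeasurableSpace Z] {μ : Measure Y} {ν : Measure Z} [SFinite μ] [SFinite ν]
    {K : Y × Z → ℝ≥0∞} (hK : Measurable K) {C : ℝ≥0∞}
    (hKC : ∀ᵐ z ∂ν, ∫⁻ y, K (y, z) ∂μ ≤ C) {F : Z → ℝ≥0∞} (hF : Measurable F) :
    ∫⁻ y, ∫⁻ z, K (y, z) * F z ∂ν ∂μ ≤ C * ∫⁻ z, F z ∂ν :=
  calc ∫⁻ y, ∫⁻ z, K (y, z) * F z ∂ν ∂μ = ∫⁻ z, (∫⁻ y, K (y, z) ∂μ) * F z ∂ν := by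
        rw [lintegral_lintegral_swap (hK.mul (hF.comp measurable_snd)).aemeasurable]
        exact lintegral_congr fun z => lintegral_mul_const _ (hK.comp measurable_prodMk_right)
    _ ≤ ∫⁻ z, C * F z ∂ν := lintegral_mono_ae (hKC.mono fun z hz => by gcongr)
    _ = C * ∫⁻ z, F z ∂ν := lintegral_const_mul C hF

theorem lintegral_young_comp_kernel_le_general
    {Y Z : Type*} [MeasurableSpace Y] [MeasurableSpace Z]
    (μ : Measure Y) (ν : Measure Z) [SigmaFinite μ] [SigmaFinite ν]
    (K : Y × Z → ℝ≥0∞) (hK : Measurable K)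
    (A B : ℝ) (hA : 0 < A)
    (hKA : ∀ᵐ y ∂μ, ∫⁻ z, K (y, z) ∂ν ≤ ENNReal.ofReal A)
    (hKB : ∀ᵐ z ∂ν, ∫⁻ y, K (y, z) ∂μ ≤ ENNReal.ofReal B)
    (φ : ℝ → ℝ) (hφ : IsYoungFunction φ)
    (u : Z → ℝ) (hu : Measurable u) (hu0 : ∀ z, 0 ≤ u z) :
    ∫⁻ y, ENNReal.ofReal
        (φ ((1 / A) * (∫⁻ z, K (y, z) * ENNReal.ofReal (u z) ∂ν).toReal)) ∂μ ≤
      ENNReal.ofReal (B / A) * ∫⁻ z, ENNReal.ofReal (φ (u z)) ∂ν := by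
  calc _ ≤ ∫⁻ y, (ENNReal.ofReal A)⁻¹ * ∫⁻ z, K (y, z) * ENNReal.ofReal (φ (u z)) ∂ν ∂μ := by
        refine lintegral_mono_ae (hKA.mono fun y hy => ?_)
        rw [one_div]
        exact hφ.ofReal_map_inv_mul_lintegral_mul_le (hK.comp measurable_prodMk_left) hA hy hu
          (ae_of_all _ hu0)
    _ = (ENNReal.ofReal A)⁻¹ * ∫⁻ y, ∫⁻ z, K (y, z) * ENNReal.ofReal (φ (u z)) ∂ν ∂μ :=
        lintegral_const_mul' _ _ (by simp [hA])
    _ ≤ (ENNReal.ofReal A)⁻¹ * (ENNReal.ofReal B * ∫⁻ z, ENNReal.ofReal (φ (u z)) ∂ν) := by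
        gcongr
        exact lintegral_lintegral_mul_le_of_ae_lintegral_le hK hKB
          (hφ.continuous.measurable.comp hu).ennreal_ofReal
    _ = _ := by rw [ofReal_div_of_pos hA, div_eq_mul_inv]; ring

/-- Jensen-type estimate for an integral operator with a kernel having uniformly
bounded marginals (a modular Schur-test). -/
theorem lintegral_young_comp_kernel_le
    {Y Z : Type*} [MeasurableSpace Y] [MeasurableSpace Z]
    (μ : Measure Y) (ν : Measure Z) [SigmaFinite μ] [SigmaFinite ν]
    (K : Y × Z → ℝ≥0∞) (hK : Measurable K)
    (A B : ℝ) (hA : 0 < A) (hB : 0 ≤ B)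
    (hKA : ∀ᵐ y ∂μ, ∫⁻ z, K (y, z) ∂ν ≤ ENNReal.ofReal A)
    (hKB : ∀ᵐ z ∂ν, ∫⁻ y, K (y, z) ∂μ ≤ ENNReal.ofReal B)
    (φ : ℝ → ℝ) (hφ : IsYoungFunction φ)
    (u : Z → ℝ) (hu : Measurable u) (hu0 : ∀ z, 0 ≤ u z)
    (hfin : ∀ᵐ y ∂μ, ∫⁻ z, K (y, z) * ENNReal.ofReal (u z) ∂ν < ⊤) :
    ∫⁻ y, ENNReal.ofReal
        (φ ((1 / A) * (∫⁻ z, K (y, z) * ENNReal.ofReal (u z) ∂ν).toReal)) ∂μ ≤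
      ENNReal.ofReal (B / A) * ∫⁻ z, ENNReal.ofReal (φ (u z)) ∂ν :=
  lintegral_young_comp_kernel_le_general μ ν K hK A B hA hKA hKB φ hφ u hu hu0
end

section
/- Let n ≥ 1, let y ∈ B(0,1) ⊂ ℝ^n and let z ∈ ℝ^n with z ≠ y. Then ∫_0^1 𝟙_{B(ty, (1−t)/2)}(z)·(1−t)^{−n−1} dt ≤ 2^n/(n·‖z − y‖^n). (In particular, if z ∈ B(ty,(1−t)/2) for some t ∈ [0,1] then ‖z − y‖ ≤ 2(1−t).) -/
/-!
If `z ∈ B(ty, (1 - t)/2)` then `‖z - y‖ ≤ ‖z - ty‖ + (1 - t)‖y‖ ≤ 2(1 - t)`, so the integrand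
vanishes unless `1 - t ≥ ‖z - y‖/2`. After the substitution `s = 1 - t` the integral is thus
bounded by the tail `∫_{s ≥ ‖z - y‖/2} s^(-n-1) ds = 2^n / (n‖z - y‖^n)`.
-/

open MeasureTheory ENNReal Set

theorem norm_sub_le_two_mul_of_mem_ball_smul {E : Type*} [SeminormedAddCommGroup E]
    [NormedSpace ℝ E] {y z : E} {t : ℝ} (hy : ‖y‖ ≤ 1) (ht : t ≤ 1)
    (hz : z ∈ Metric.ball (t • y) ((1 - t) / 2)) : ‖z - y‖ ≤ 2 * (1 - t) := by
  have h1t : 0 ≤ 1 - t := sub_nonneg.mpr ht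
  have hcenter : ‖t • y - y‖ ≤ 1 - t := by
    rw [show t • y - y = -((1 - t) • y) by rw [sub_smul, one_smul, neg_sub], norm_neg,
      norm_smul, Real.norm_of_nonneg h1t]
    exact mul_le_of_le_one_right h1t hy
  calc ‖z - y‖ ≤ ‖z - t • y‖ + ‖t • y - y‖ := norm_sub_le_norm_sub_add_norm_sub _ _ _
    _ ≤ (1 - t) / 2 + (1 - t) := add_le_add (mem_ball_iff_norm.mp hz).le hcenter
    _ ≤ 2 * (1 - t) := by linarith

theorem lintegral_Ici_rpow_of_lt {a c : ℝ} (ha : a < -1) (hc : 0 < c) :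
    ∫⁻ s in Ici c, ENNReal.ofReal (s ^ a) = ENNReal.ofReal (-c ^ (a + 1) / (a + 1)) := by
  rw [← setLIntegral_congr Ioi_ae_eq_Ici, ← integral_Ioi_rpow_of_lt ha hc,
    ofReal_integral_eq_lintegral_ofReal (integrableOn_Ioi_rpow_of_lt ha hc)]
  filter_upwards [ae_restrict_mem measurableSet_Ioi] with s hs
  exact Real.rpow_nonneg (hc.trans hs).le _

theorem lintegral_Iic_sub_rpow_of_lt {a b c : ℝ} (ha : a < -1) (hc : 0 < c) :
    ∫⁻ t in Iic (b - c), ENNReal.ofReal ((b - t) ^ a) =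
      ENNReal.ofReal (-c ^ (a + 1) / (a + 1)) := by
  have hpre : (fun t => b - t) ⁻¹' Ici c = Iic (b - c) := by
    ext t; simp [le_sub_comm]
  rw [← lintegral_Ici_rpow_of_lt ha hc, ← hpre]
  exact (Measure.measurePreserving_sub_left volume b).setLIntegral_comp_preimage_emb
    (measurableEmbedding_subLeft b) (fun s => ENNReal.ofReal (s ^ a)) (Ici c)

/-- For `y` in the unit ball of `ℝ^n` and `z ≠ y`,
`∫_0^1 𝟙_{B(ty,(1−t)/2)}(z)·(1−t)^{−n−1} dt ≤ 2^n/(n·‖z−y‖^n)`; moreover if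
`z ∈ B(ty,(1−t)/2)` for some `t ∈ [0,1]` then `‖z − y‖ ≤ 2(1−t)`. -/
theorem lintegral_indicator_cone_kernel_le (n : ℕ) (hn : 1 ≤ n)
    (y z : EuclideanSpace ℝ (Fin n))
    (hy : y ∈ Metric.ball (0 : EuclideanSpace ℝ (Fin n)) 1) (hzy : z ≠ y) :
    (∫⁻ t in Set.Icc (0 : ℝ) 1,
        (Metric.ball (t • y) ((1 - t) / 2)).indicator
          (fun _ => ENNReal.ofReal ((1 - t) ^ (-(n : ℝ) - 1))) z ≤
      ENNReal.ofReal (2 ^ n / (n * ‖z - y‖ ^ n))) ∧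
    ∀ t ∈ Set.Icc (0 : ℝ) 1, z ∈ Metric.ball (t • y) ((1 - t) / 2) →
      ‖z - y‖ ≤ 2 * (1 - t) := by
  have hnear : ∀ t ∈ Icc (0 : ℝ) 1, z ∈ Metric.ball (t • y) ((1 - t) / 2) →
      ‖z - y‖ ≤ 2 * (1 - t) := fun t ht hz =>
    norm_sub_le_two_mul_of_mem_ball_smul (mem_ball_zero_iff.mp hy).le ht.2 hz
  refine ⟨?_, hnear⟩
  have hr : 0 < ‖z - y‖ := norm_pos_iff.mpr (sub_ne_zero.mpr hzy)
  have hn' : (0 : ℝ) < n := by exact_mod_cast hn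
  set kernel : ℝ → ℝ≥0∞ := fun t => ENNReal.ofReal ((1 - t) ^ (-(n : ℝ) - 1))
  calc _ ≤ ∫⁻ t in Icc 0 1, (Iic (1 - ‖z - y‖ / 2)).indicator kernel t := by
        refine setLIntegral_mono' measurableSet_Icc fun t ht => ?_
        refine indicator_apply_le' (fun hz => ?_) fun _ => zero_le
        have hfar : t ∈ Iic (1 - ‖z - y‖ / 2) := by rw [mem_Iic]; linarith [hnear t ht hz]
        rw [indicator_of_mem hfar]
    _ ≤ ∫⁻ t in Iic (1 - ‖z - y‖ / 2), kernel t := by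
        rw [← lintegral_indicator measurableSet_Iic]
        exact setLIntegral_le_lintegral _ _
    _ = ENNReal.ofReal (-(‖z - y‖ / 2) ^ (-(n : ℝ) - 1 + 1) / (-(n : ℝ) - 1 + 1)) :=
        lintegral_Iic_sub_rpow_of_lt (by linarith) (by positivity)
    _ = ENNReal.ofReal (2 ^ n / (n * ‖z - y‖ ^ n)) := by
        rw [sub_add_cancel, Real.rpow_neg (by positivity), Real.rpow_natCast, div_pow, inv_div]
        field_simp
end

section
/- Let n ≥ 1 and let u : ℝ^n → [0,∞] be measurable with u = 0 outside B(0,1). There exists a constant C > 0 depending only on n such that for every y ∈ B(0,1), (1/Vol(B(0,1/2)))·∫_{B(0,1/2)} ( ∫_0^1 ‖y − x‖·u(ty + (1−t)x) dt ) dx ≤ C·∫_{B(y,2)} ‖z − y‖^{1−n}·u(z) dz, where all integrals are with respect to Lebesgue measure. -/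
open MeasureTheory ENNReal

/-!
For fixed `t < 1` put `s = 1 - t` and substitute `z = t • y + s • x`: this maps `B(0, 1/2)` into
`B(y, 3s/2)` (as `‖y‖ ≤ 1`), with `‖y - x‖ = ‖z - y‖ / s` and Jacobian `s⁻ⁿ`. After Tonelli, `u z`
is weighted by `∫ ‖z - y‖ s^{-(n+1)} ds` over `s > 2‖z - y‖/3`, which is
`(3/2)ⁿ/n · ‖z - y‖^{1-n}`. Finally `u` vanishes outside `B(0,1) ⊆ B(y,2)`.
-/

open Set Metric Module

lemma lintegral_Ioi_rpow_of_lt {a c : ℝ} (ha : a < -1) (hc : 0 < c) :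
    ∫⁻ t in Ioi c, ENNReal.ofReal (t ^ a) = ENNReal.ofReal (-c ^ (a + 1) / (a + 1)) := by
  rw [← integral_Ioi_rpow_of_lt ha hc, ofReal_integral_eq_lintegral_ofReal
    (integrableOn_Ioi_rpow_of_lt ha hc)]
  filter_upwards [self_mem_ae_restrict measurableSet_Ioi] with t ht
  exact Real.rpow_nonneg (hc.trans ht).le a

/-- The weight of `u z` in the slice `s = 1 - t`, where `r = ‖z - y‖`. -/
noncomputable def coneKernel (d : ℕ) (r s : ℝ) : ℝ≥0∞ :=
  if 2 / 3 * r < s then ENNReal.ofReal (r / s ^ (d + 1)) else 0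

@[fun_prop]
lemma Measurable.coneKernel {α : Type*} [MeasurableSpace α] (d : ℕ) {f g : α → ℝ}
    (hf : Measurable f) (hg : Measurable g) : Measurable fun a => coneKernel d (f a) (g a) :=
  Measurable.ite (measurableSet_lt (by fun_prop) hg) (by fun_prop) measurable_const

lemma ofReal_pow_mul_coneKernel_mul_self (d : ℕ) {r s : ℝ} (hs : 0 < s)
    (hr : r < 3 / 2) : ENNReal.ofReal (s ^ d) * coneKernel d (s * r) s = ENNReal.ofReal r := by
  have hlt : 2 / 3 * (s * r) < s := by nlinarith
  rw [coneKernel, if_pos hlt, ← ofReal_mul (by positivity)]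
  congr 1
  field_simp
  ring

lemma lintegral_coneKernel {d : ℕ} (hd : d ≠ 0) {r : ℝ} (hr : 0 < r) :
    ∫⁻ s, coneKernel d r s = ENNReal.ofReal ((3 / 2) ^ d / d * r ^ (1 - d : ℝ)) := by
  have hc : 0 < 2 / 3 * r := by positivity
  have hd₁ : (1 : ℝ) ≤ d := by exact_mod_cast Nat.one_le_iff_ne_zero.2 hd
  calc ∫⁻ s, coneKernel d r s
      = ∫⁻ s in Ioi (2 / 3 * r), ENNReal.ofReal r * ENNReal.ofReal (s ^ (-(d + 1) : ℝ)) := by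
        rw [← lintegral_indicator measurableSet_Ioi]
        refine lintegral_congr fun s => ?_
        by_cases hs : 2 / 3 * r < s
        · rw [coneKernel, if_pos hs, indicator_of_mem (mem_Ioi.2 hs), ← ofReal_mul hr.le,
            Real.rpow_neg (hc.trans hs).le, ← Nat.cast_add_one, Real.rpow_natCast, div_eq_mul_inv]
        · rw [coneKernel, if_neg hs, indicator_of_notMem (by simpa using hs)]
    _ = ENNReal.ofReal r * ENNReal.ofReal (-(2 / 3 * r) ^ (-(d + 1) + 1 : ℝ) / (-(d + 1) + 1)) := by
        rw [lintegral_const_mul' _ _ ofReal_ne_top, lintegral_Ioi_rpow_of_lt (by linarith) hc]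
    _ = _ := by
        rw [← ofReal_mul hr.le]
        congr 1
        rw [show (-(d + 1) + 1 : ℝ) = -d by ring, Real.mul_rpow (by norm_num) hr.le,
          Real.rpow_sub hr, Real.rpow_one, Real.rpow_neg (by norm_num), Real.rpow_neg hr.le,
          Real.rpow_natCast, Real.rpow_natCast, div_pow, div_pow]
        field_simp

lemma setLIntegral_coneKernel_one_sub_le {d : ℕ} (hd : d ≠ 0) {r : ℝ} (hr : 0 ≤ r) (s : Set ℝ) :
    ∫⁻ t in s, coneKernel d r (1 - t) ≤ ENNReal.ofReal ((3 / 2) ^ d / d * r ^ (1 - d : ℝ)) := by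
  rcases hr.eq_or_lt with rfl | hr
  · simp [coneKernel]
  · calc ∫⁻ t in s, coneKernel d r (1 - t) ≤ ∫⁻ t, coneKernel d r (1 - t) :=
          setLIntegral_le_lintegral _ _
      _ = _ := by rw [lintegral_sub_left_eq_self (coneKernel d r) 1, lintegral_coneKernel hd hr]

section AddHaar

variable {E : Type*} [NormedAddCommGroup E] [NormedSpace ℝ E] [FiniteDimensional ℝ E]
  [MeasurableSpace E] [BorelSpace E] (μ : Measure E) [μ.IsAddHaarMeasure]

lemma lintegral_comp_add_smul (f : E → ℝ≥0∞) (v : E) {s : ℝ} (hs : s ≠ 0) :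
    ∫⁻ x, f (v + s • x) ∂μ = ENNReal.ofReal |(s ^ finrank ℝ E)⁻¹| * ∫⁻ z, f z ∂μ := by
  have h := lintegral_map_equiv (μ := μ) (fun z => f (v + z)) (MeasurableEquiv.smul₀ s hs)
  rw [MeasurableEquiv.coe_smul₀, Measure.map_addHaar_smul μ hs, lintegral_smul_measure,
    lintegral_add_left_eq_self (fun z => f z) v, smul_eq_mul] at h
  exact h.symm

lemma setLIntegral_ball_le_lintegral_coneKernel (u : E → ℝ≥0∞) {y : E} (hy : ‖y‖ ≤ 1) {t : ℝ}
    (ht : t < 1) :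
    ∫⁻ x in ball (0 : E) (1 / 2), ENNReal.ofReal ‖y - x‖ * u (t • y + (1 - t) • x) ∂μ ≤
      ∫⁻ z, coneKernel (finrank ℝ E) ‖z - y‖ (1 - t) * u z ∂μ := by
  set d := finrank ℝ E
  set s := 1 - t with hs_def
  have hs : 0 < s := sub_pos.2 ht
  set g : E → ℝ≥0∞ := fun z => coneKernel d ‖z - y‖ s * u z
  have hg : ∀ x ∈ ball (0 : E) (1 / 2),
      ENNReal.ofReal ‖y - x‖ * u (t • y + s • x) = ENNReal.ofReal (s ^ d) * g (t • y + s • x) := by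
    intro x hx
    have hz : ‖t • y + s • x - y‖ = s * ‖x - y‖ := by
      rw [show t • y + s • x - y = s • (x - y) by rw [hs_def]; module, norm_smul,
        Real.norm_of_nonneg hs.le]
    have hxy : ‖x - y‖ < 3 / 2 := by
      rw [mem_ball_zero_iff] at hx
      linarith [norm_sub_le x y]
    rw [← mul_assoc, hz, ofReal_pow_mul_coneKernel_mul_self _ hs hxy, norm_sub_rev]
  calc _ = ∫⁻ x in ball (0 : E) (1 / 2), ENNReal.ofReal (s ^ d) * g (t • y + s • x) ∂μ :=
        setLIntegral_congr_fun measurableSet_ball hg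
    _ = ENNReal.ofReal (s ^ d) * ∫⁻ x in ball (0 : E) (1 / 2), g (t • y + s • x) ∂μ :=
        lintegral_const_mul' _ _ ofReal_ne_top
    _ ≤ ENNReal.ofReal (s ^ d) * ∫⁻ x, g (t • y + s • x) ∂μ := by
        gcongr; exact Measure.restrict_le_self
    _ = ∫⁻ z, g z ∂μ := by
        rw [lintegral_comp_add_smul μ g _ hs.ne', ← mul_assoc, ← ofReal_mul (by positivity),
          abs_of_pos (by positivity), mul_inv_cancel₀ (by positivity), ofReal_one, one_mul]

theorem setLIntegral_ball_cone_integral_le (hd : finrank ℝ E ≠ 0) {u : E → ℝ≥0∞}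
    (hu : Measurable u) {y : E} (hy : ‖y‖ ≤ 1) :
    ∫⁻ x in ball (0 : E) (1 / 2), (∫⁻ t in Icc (0 : ℝ) 1,
        ENNReal.ofReal ‖y - x‖ * u (t • y + (1 - t) • x)) ∂μ ≤
      ENNReal.ofReal ((3 / 2) ^ finrank ℝ E / finrank ℝ E) *
        ∫⁻ z, ENNReal.ofReal (‖z - y‖ ^ (1 - finrank ℝ E : ℝ)) * u z ∂μ := by
  set d := finrank ℝ E
  calc _ = ∫⁻ t in Icc (0 : ℝ) 1, ∫⁻ x in ball (0 : E) (1 / 2),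
        ENNReal.ofReal ‖y - x‖ * u (t • y + (1 - t) • x) ∂μ :=
        lintegral_lintegral_swap (by fun_prop)
    _ ≤ ∫⁻ t in Icc (0 : ℝ) 1, ∫⁻ z, coneKernel d ‖z - y‖ (1 - t) * u z ∂μ := by
        refine setLIntegral_mono_ae' measurableSet_Icc ?_
        filter_upwards [volume.ae_ne 1] with t ht₁ ht
        exact setLIntegral_ball_le_lintegral_coneKernel μ u hy (lt_of_le_of_ne ht.2 ht₁)
    _ = ∫⁻ z, (∫⁻ t in Icc (0 : ℝ) 1, coneKernel d ‖z - y‖ (1 - t)) * u z ∂μ := by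
        rw [lintegral_lintegral_swap (by fun_prop)]
        exact lintegral_congr fun z => lintegral_mul_const _ (by fun_prop)
    _ ≤ ∫⁻ z, ENNReal.ofReal ((3 / 2) ^ d / d * ‖z - y‖ ^ (1 - d : ℝ)) * u z ∂μ := by
        gcongr with z
        exact setLIntegral_coneKernel_one_sub_le hd (norm_nonneg _) _
    _ = _ := by
        simp_rw [ofReal_mul (by positivity : (0 : ℝ) ≤ (3 / 2) ^ d / d), mul_assoc]
        exact lintegral_const_mul' _ _ ofReal_ne_top

end AddHaar

/-- The averaged cone integral is controlled by a Riesz-type potential: there is a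
constant `C > 0` depending only on `n` such that for every measurable
`u : ℝ^n → [0,∞]` vanishing outside the unit ball and every `y` in the unit ball,
`(1/Vol(B(0,1/2)))·∫_{B(0,1/2)} ∫_0^1 ‖y−x‖·u(ty+(1−t)x) dt dx
  ≤ C·∫_{B(y,2)} ‖z−y‖^{1−n}·u(z) dz`. -/
theorem average_cone_integral_le_riesz_potential (n : ℕ) (hn : 1 ≤ n) :
    ∃ C : ℝ, 0 < C ∧ ∀ u : EuclideanSpace ℝ (Fin n) → ℝ≥0∞, Measurable u →
      (∀ x, x ∉ Metric.ball (0 : EuclideanSpace ℝ (Fin n)) 1 → u x = 0) →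
      ∀ y ∈ Metric.ball (0 : EuclideanSpace ℝ (Fin n)) 1,
        (volume (Metric.ball (0 : EuclideanSpace ℝ (Fin n)) (1 / 2)))⁻¹ *
            ∫⁻ x in Metric.ball (0 : EuclideanSpace ℝ (Fin n)) (1 / 2),
              ∫⁻ t in Set.Icc (0 : ℝ) 1,
                ENNReal.ofReal ‖y - x‖ * u (t • y + (1 - t) • x) ≤
          ENNReal.ofReal C *
            ∫⁻ z in Metric.ball y 2,
              ENNReal.ofReal (‖z - y‖ ^ ((1 : ℝ) - n)) * u z := by
  set B := ball (0 : EuclideanSpace ℝ (Fin n)) (1 / 2)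
  have hB : (volume B)⁻¹ ≠ ⊤ := inv_ne_top.2 (measure_ball_pos _ _ (by norm_num)).ne'
  have hd : finrank ℝ (EuclideanSpace ℝ (Fin n)) ≠ 0 := by
    rw [finrank_euclideanSpace_fin]; omega
  refine ⟨(volume B)⁻¹.toReal * ((3 / 2) ^ n / n), ?_, fun u hu hsupp y hy => ?_⟩
  · have := toReal_pos (ENNReal.inv_ne_zero.2 measure_ball_lt_top.ne) hB
    positivity
  have hy₁ : ‖y‖ < 1 := mem_ball_zero_iff.1 hy
  have hsupp' : (fun z => ENNReal.ofReal (‖z - y‖ ^ ((1 : ℝ) - n)) * u z).support ⊆ ball y 2 :=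
    (Function.support_mul_subset_right _ _).trans <| (Function.support_subset_iff'.2 hsupp).trans <|
      ball_subset_ball' (by rw [dist_comm, dist_zero_right]; linarith)
  have key := setLIntegral_ball_cone_integral_le volume hd hu hy₁.le
  rw [finrank_euclideanSpace_fin] at key
  rw [setLIntegral_eq_of_support_subset hsupp', ofReal_mul (by positivity), ofReal_toReal hB,
    mul_assoc]
  gcongr
end

section
/- Let m ≥ 0 and N ≥ 1 be integers, let S and T be countable sets, and for each i ∈ {0,…,m+1} let ∂_i : T → S be a map such that for every σ ∈ S the number of pairs (i,τ) with i ∈ {0,…,m+1}, τ ∈ T and ∂_i(τ) = σ is at most N. Let φ be a Young function, θ : S → ℝ a function, and α > 0. Then Σ_{τ∈T} φ( (1/α)·|Σ_{i=0}^{m+1} (−1)^i θ(∂_i τ)| ) ≤ (N/(m+2))·Σ_{σ∈S} φ( (m+2)·|θ(σ)|/α ), where the sums are taken in [0,∞]. -/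
/-!
An even convex function is nondecreasing in `|t|`, so the alternating signs in `δθ(τ)` may be
replaced by absolute values; Jensen's inequality for the mean of the `m + 2` numbers
`(m + 2)|θ(∂ᵢτ)|/α` then bounds each term by the average of `φ` over the faces of `τ`.
Summing over `τ` visits every `σ` once per pair `(i, τ)` with `∂ᵢτ = σ`, hence at most `N` times.
-/

open ENNReal

open Finset

lemma ConvexOn.le_of_abs_le_of_even {φ : ℝ → ℝ} (hconv : ConvexOn ℝ Set.univ φ)
    (heven : Function.Even φ) {x y : ℝ} (h : |x| ≤ |y|) : φ x ≤ φ y := by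
  have hx : x ∈ segment ℝ (-|y|) |y| := by
    rw [segment_eq_Icc (neg_le_self (abs_nonneg y))]
    exact abs_le.1 h
  have habs : φ |y| = φ y := by
    rcases abs_choice y with hy | hy <;> rw [hy]
    exact heven y
  calc φ x ≤ max (φ (-|y|)) (φ |y|) := hconv.le_on_segment trivial trivial hx
    _ = φ y := by rw [heven, max_self, habs]

lemma ConvexOn.map_sum_le_average {ι : Type*} {φ : ℝ → ℝ} (hconv : ConvexOn ℝ Set.univ φ)
    {s : Finset ι} (hs : s.Nonempty) (x : ι → ℝ) :
    φ (∑ i ∈ s, x i) ≤ (∑ i ∈ s, φ (#s * x i)) / #s := by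
  have hcard : (0 : ℝ) < #s := by exact_mod_cast hs.card_pos
  have h := hconv.map_sum_le (t := s) (w := fun _ ↦ 1 / (#s : ℝ)) (p := fun i ↦ #s * x i)
    (fun _ _ ↦ by positivity) (by simp [hcard.ne']) (fun _ _ ↦ trivial)
  simp only [smul_eq_mul, ← Finset.mul_sum, ← mul_assoc, one_div_mul_cancel hcard.ne',
    one_mul] at h
  rwa [one_div_mul_eq_div] at h

lemma ConvexOn.map_abs_sum_le_average {ι : Type*} {φ : ℝ → ℝ} (hconv : ConvexOn ℝ Set.univ φ)
    (heven : Function.Even φ) {s : Finset ι} (hs : s.Nonempty) (x : ι → ℝ) :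
    φ |∑ i ∈ s, x i| ≤ (∑ i ∈ s, φ (#s * |x i|)) / #s := by
  have hle : φ |∑ i ∈ s, x i| ≤ φ (∑ i ∈ s, |x i|) := by
    refine hconv.le_of_abs_le_of_even heven ?_
    rw [abs_abs, abs_of_nonneg (Finset.sum_nonneg fun i _ ↦ abs_nonneg (x i))]
    exact Finset.abs_sum_le_sum_abs x s
  exact hle.trans (hconv.map_sum_le_average hs _)

lemma IsYoungFunction.ofReal_map_abs_sum_le_average {ι : Type*} {φ : ℝ → ℝ}
    (hφ : IsYoungFunction φ) {s : Finset ι} (hs : s.Nonempty) (x : ι → ℝ) :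
    ENNReal.ofReal (φ |∑ i ∈ s, x i|) ≤ (∑ i ∈ s, ENNReal.ofReal (φ (#s * |x i|))) / #s := by
  obtain ⟨hconv, heven, hnonneg, -⟩ := hφ
  have hcard : (0 : ℝ) < #s := by exact_mod_cast hs.card_pos
  calc ENNReal.ofReal (φ |∑ i ∈ s, x i|)
      ≤ ENNReal.ofReal ((∑ i ∈ s, φ (#s * |x i|)) / #s) :=
        ENNReal.ofReal_le_ofReal (hconv.map_abs_sum_le_average heven hs x)
    _ = _ := by
        rw [ENNReal.ofReal_div_of_pos hcard, ENNReal.ofReal_sum_of_nonneg fun _ _ ↦ hnonneg _,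
          ENNReal.ofReal_natCast]

lemma ENNReal.tsum_comp_le_mul_tsum {ι S : Type*} (f : ι → S) (g : S → ℝ≥0∞) {N : ℕ∞}
    (hf : ∀ σ, (f ⁻¹' {σ}).encard ≤ N) : ∑' p, g (f p) ≤ (N : ℝ≥0∞) * ∑' σ, g σ := by
  rw [← ENNReal.tsum_fiberwise _ f, ← ENNReal.tsum_mul_left]
  refine ENNReal.tsum_le_tsum fun σ ↦ ?_
  calc ∑' p : f ⁻¹' {σ}, g (f p) = ∑' _ : f ⁻¹' {σ}, g σ := tsum_congr fun p ↦ by rw [p.2]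
    _ = (f ⁻¹' {σ}).encard * g σ := ENNReal.tsum_set_const _ _
    _ ≤ N * g σ := by gcongr; exact_mod_cast hf σ

theorem coboundary_modular_estimate_general (m N : ℕ)
    (S T : Type*)
    (bdry : Fin (m + 2) → T → S)
    (hfin : ∀ σ : S, {p : Fin (m + 2) × T | bdry p.1 p.2 = σ}.Finite)
    (hcard : ∀ σ : S, {p : Fin (m + 2) × T | bdry p.1 p.2 = σ}.ncard ≤ N)
    (φ : ℝ → ℝ) (hφ : IsYoungFunction φ) (θ : S → ℝ) (α : ℝ) (hα : 0 < α) :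
    ∑' τ : T, ENNReal.ofReal
        (φ ((1 / α) * |∑ i : Fin (m + 2), (-1 : ℝ) ^ (i : ℕ) * θ (bdry i τ)|)) ≤
      ((N : ℝ≥0∞) / ((m : ℝ≥0∞) + 2)) *
        ∑' σ : S, ENNReal.ofReal (φ (((m : ℝ) + 2) * |θ σ| / α)) := by
  set F : S → ℝ≥0∞ := fun σ ↦ ENNReal.ofReal (φ (((m : ℝ) + 2) * |θ σ| / α))
  have hterm : ∀ τ, ENNReal.ofReal
      (φ ((1 / α) * |∑ i : Fin (m + 2), (-1 : ℝ) ^ (i : ℕ) * θ (bdry i τ)|)) ≤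
        (∑ i, F (bdry i τ)) / ((m : ℝ≥0∞) + 2) := fun τ ↦ by
    have h := hφ.ofReal_map_abs_sum_le_average univ_nonempty
      fun i : Fin (m + 2) ↦ (-1 : ℝ) ^ (i : ℕ) * θ (bdry i τ) / α
    simp only [← Finset.sum_div, abs_div, abs_mul, abs_pow, abs_neg, abs_one, one_pow, one_mul,
      abs_of_pos hα, card_univ, Fintype.card_fin] at h
    push_cast at h
    simpa only [F, one_div_mul_eq_div, mul_div_assoc] using h
  have hfiber : ∀ σ, ((fun p : Fin (m + 2) × T ↦ bdry p.1 p.2) ⁻¹' {σ}).encard ≤ N := fun σ ↦ by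
    change {p : Fin (m + 2) × T | bdry p.1 p.2 = σ}.encard ≤ N
    rw [← (hfin σ).cast_ncard_eq]
    exact_mod_cast hcard σ
  calc _ ≤ ∑' τ, (∑ i, F (bdry i τ)) / ((m : ℝ≥0∞) + 2) := ENNReal.tsum_le_tsum hterm
    _ = (∑' p : Fin (m + 2) × T, F (bdry p.1 p.2)) / ((m : ℝ≥0∞) + 2) := by
        simp only [div_eq_mul_inv]
        rw [ENNReal.tsum_mul_right, ENNReal.tsum_prod (f := fun i τ ↦ F (bdry i τ)),
          ENNReal.tsum_comm]
        simp only [tsum_fintype]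
    _ ≤ N * (∑' σ, F σ) / ((m : ℝ≥0∞) + 2) := by
        gcongr
        simpa only [ENat.toENNReal_coe] using
          ENNReal.tsum_comp_le_mul_tsum (fun p : Fin (m + 2) × T ↦ bdry p.1 p.2) F hfiber
    _ = _ := ENNReal.mul_div_right_comm

/-- Modular estimate for the simplicial coboundary operator on Orlicz sequence
spaces: if each `σ ∈ S` arises as a face `∂_i τ` for at most `N` pairs `(i,τ)`, then
`Σ_τ φ((1/α)|Σ_i (−1)^i θ(∂_i τ)|) ≤ (N/(m+2))·Σ_σ φ((m+2)|θ(σ)|/α)`. -/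
theorem coboundary_modular_estimate (m N : ℕ) (hN : 1 ≤ N)
    (S T : Type*) [Countable S] [Countable T]
    (bdry : Fin (m + 2) → T → S)
    (hfin : ∀ σ : S, {p : Fin (m + 2) × T | bdry p.1 p.2 = σ}.Finite)
    (hcard : ∀ σ : S, {p : Fin (m + 2) × T | bdry p.1 p.2 = σ}.ncard ≤ N)
    (φ : ℝ → ℝ) (hφ : IsYoungFunction φ) (θ : S → ℝ) (α : ℝ) (hα : 0 < α) :
    ∑' τ : T, ENNReal.ofReal
        (φ ((1 / α) * |∑ i : Fin (m + 2), (-1 : ℝ) ^ (i : ℕ) * θ (bdry i τ)|)) ≤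
      ((N : ℝ≥0∞) / ((m : ℝ≥0∞) + 2)) *
        ∑' σ : S, ENNReal.ofReal (φ (((m : ℝ) + 2) * |θ σ| / α)) :=
  coboundary_modular_estimate_general m N S T bdry hfin hcard φ hφ θ α hα
end
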